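/- arXiv:2602.09741 — 2 statements merged into one kernel-verified Lean document; each statement's English description precedes it below -/
import Mathlib

section
/- Let γ ∈ (0,1/2] and let ω be a weight on ℝ. Then ω ∈ A₁⁺(ℝ) if and only if ⟨ω⟩ := sup over all a<b≤c<d with b-a = d-c = γ(d-a) of ( (1/(b-a))∫_{(a,b)} ω ) · ( ess inf_{(c,d)} ω )^{-1} is finite. Moreover [ω]_{A₁⁺(ℝ)} ≤ ⟨ω⟩ ≤ (1/γ)[ω]_{A₁⁺(ℝ)}. -/
open MeasureTheory Set Filter ENNReal NNReal

noncomputable section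

/-- The one-sided maximal operator `M⁻`, `ℝ≥0∞`-valued. -/
def Mminus (f : ℝ → ℝ) (x : ℝ) : ℝ≥0∞ :=
  ⨆ (h : ℝ) (_ : 0 < h),
    ENNReal.ofReal (1 / h) * ∫⁻ y in Ioo (x - h) x, ENNReal.ofReal |f y|

/-- The `A₁⁺(ℝ)` constant `ess sup_x M⁻(ω)(x)/ω(x)`. -/
def A1plusConst (ω : ℝ → ℝ) : ℝ≥0∞ :=
  essSup (fun x => Mminus ω x / ENNReal.ofReal (ω x)) volume

/-- `ω ∈ A₁⁺(ℝ)`: a weight (nonnegative, locally integrable, positive a.e.)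
with finite `A₁⁺` constant. -/
def IsA1plusWeight (ω : ℝ → ℝ) : Prop :=
  LocallyIntegrable ω volume ∧ (∀ x, 0 ≤ ω x) ∧
    (∀ᵐ x ∂(volume : Measure ℝ), 0 < ω x) ∧ A1plusConst ω < ⊤

/-- The `BLO⁺` quantity for an interval `I = (a,b)`:
`(1/|I⁻|) ∫_{I⁻} (f − ess inf_{I⁺} f)₊`. -/
def bloTerm (f : ℝ → ℝ) (a b : ℝ) : ℝ≥0∞ :=
  ENNReal.ofReal (2 / (b - a)) *
    ∫⁻ x in Ioo a ((a + b) / 2),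
      ENNReal.ofReal (max (f x - essInf f (volume.restrict (Ioo ((a + b) / 2) b))) 0)

/-- The `BLO⁺(ℝ)` seminorm. -/
def bloNorm (f : ℝ → ℝ) : ℝ≥0∞ :=
  ⨆ (a : ℝ) (b : ℝ) (_ : a < b), bloTerm f a b

/-- `f ∈ BLO⁺(ℝ)`. -/
def MemBLOplus (f : ℝ → ℝ) : Prop :=
  LocallyIntegrable f volume ∧ bloNorm f < ⊤

/-- The `BMO⁺` quantity for an interval `I = (a,b)`:
`(1/|I⁻|) ∫_{I⁻} (f − avg_{I⁺} f)₊`. -/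
def bmoTerm (f : ℝ → ℝ) (a b : ℝ) : ℝ≥0∞ :=
  ENNReal.ofReal (2 / (b - a)) *
    ∫⁻ x in Ioo a ((a + b) / 2),
      ENNReal.ofReal (max (f x - ⨍ y in Ioo ((a + b) / 2) b, f y) 0)

/-- The `BMO⁺(ℝ)` seminorm. -/
def bmoNorm (f : ℝ → ℝ) : ℝ≥0∞ :=
  ⨆ (a : ℝ) (b : ℝ) (_ : a < b), bmoTerm f a b

/-- `f ∈ BMO⁺(ℝ)`. -/
def MemBMOplus (f : ℝ → ℝ) : Prop :=
  LocallyIntegrable f volume ∧ bmoNorm f < ⊤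

/-- The quantity `⟨ω⟩_{A₁⁺(ℝ)}` with separation parameter `γ`. -/
def angleA1 (γ : ℝ) (ω : ℝ → ℝ) : ℝ≥0∞ :=
  ⨆ (a : ℝ) (b : ℝ) (c : ℝ) (d : ℝ) (_ : a < b) (_ : b ≤ c) (_ : c < d)
    (_ : b - a = γ * (d - a)) (_ : d - c = γ * (d - a)),
    (ENNReal.ofReal (1 / (b - a)) * ∫⁻ y in Ioo a b, ENNReal.ofReal (ω y)) /
      essInf (fun y => ENNReal.ofReal (ω y)) (volume.restrict (Ioo c d))

set_option maxHeartbeats 1000000 in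
/-- `ω ∈ A₁⁺(ℝ)` iff `⟨ω⟩_{A₁⁺(ℝ)} < ∞`, with
`[ω]_{A₁⁺(ℝ)} ≤ ⟨ω⟩_{A₁⁺(ℝ)} ≤ (1/γ)[ω]_{A₁⁺(ℝ)}`. -/
theorem stmt1 (γ : ℝ) (hγ : γ ∈ Ioc (0 : ℝ) (1 / 2))
    (ω : ℝ → ℝ) (hω : LocallyIntegrable ω volume) (hω0 : ∀ x, 0 ≤ ω x)
    (hωpos : ∀ᵐ x ∂(volume : Measure ℝ), 0 < ω x) :
    (A1plusConst ω < ⊤ ↔ angleA1 γ ω < ⊤) ∧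
    A1plusConst ω ≤ angleA1 γ ω ∧
    angleA1 γ ω ≤ ENNReal.ofReal (1 / γ) * A1plusConst ω := by
  obtain ⟨hγ0, hγ2⟩ := hγ
  have hγ1 : γ < 1 := lt_of_le_of_lt hγ2 (by norm_num)
  set K := angleA1 γ ω with hKdef
  set A := A1plusConst ω with hAdef
  have habs : ∀ s : Set ℝ,
      (∫⁻ y in s, ENNReal.ofReal |ω y|) = ∫⁻ y in s, ENNReal.ofReal (ω y) := fun s =>
    lintegral_congr fun y => by rw [abs_of_nonneg (hω0 y)]
  -- upper bound
  have hup : K ≤ ENNReal.ofReal (1 / γ) * A := by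
    rcases eq_top_or_lt_top A with hAtop | hAlt
    · rw [hAtop, ENNReal.mul_top (ENNReal.ofReal_pos.mpr (by positivity)).ne']
      exact le_top
    rw [hKdef, angleA1]
    refine iSup_le fun a => iSup_le fun b => iSup_le fun c => iSup_le fun d =>
      iSup_le fun hab => iSup_le fun hbc => iSup_le fun hcd => iSup_le fun h1 =>
      iSup_le fun h2 => ?_
    set g := fun y => ENNReal.ofReal (ω y) with hg
    set avg := ENNReal.ofReal (1 / (b - a)) * ∫⁻ y in Ioo a b, g y with havgdef
    clear_value avg
    have hda : 0 < d - a := by linarith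
    have hba : 0 < b - a := by linarith
    have hae : ∀ᵐ y ∂(volume.restrict (Ioo c d)),
        ENNReal.ofReal γ * avg ≤ A * ENNReal.ofReal (ω y) := by
      have h3 : ∀ᵐ y ∂(volume : Measure ℝ), Mminus ω y / ENNReal.ofReal (ω y) ≤ A :=
        ENNReal.ae_le_essSup _
      filter_upwards [ae_restrict_mem measurableSet_Ioo, ae_restrict_of_ae (h3.and hωpos)]
        with y hy h45
      obtain ⟨h4, h5⟩ := h45
      have h6 : Mminus ω y ≤ A * ENNReal.ofReal (ω y) :=
        (ENNReal.div_le_iff_le_mul (Or.inl (ENNReal.ofReal_pos.mpr h5).ne')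
          (Or.inl ENNReal.ofReal_ne_top)).mp h4
      refine le_trans ?_ h6
      have hya : 0 < y - a := by
        have : a < y := by have := hy.1; linarith
        linarith
      have h7 : ENNReal.ofReal (1 / (y - a)) *
          ∫⁻ z in Ioo (y - (y - a)) y, ENNReal.ofReal |ω z| ≤ Mminus ω y := by
        rw [Mminus]
        exact le_iSup₂ (f := fun (h : ℝ) (_ : 0 < h) =>
          ENNReal.ofReal (1 / h) * ∫⁻ z in Ioo (y - h) y, ENNReal.ofReal |ω z|) (y - a) hya
      refine le_trans ?_ h7
      have key : γ * (1 / (b - a)) ≤ 1 / (y - a) := by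
        rw [h1]
        rw [show γ * (1 / (γ * (d - a))) = 1 / (d - a) by field_simp]
        exact one_div_le_one_div_of_le hya (by linarith [hy.2])
      calc ENNReal.ofReal γ * avg
          = ENNReal.ofReal (γ * (1 / (b - a))) * ∫⁻ z in Ioo a b, g z := by
            rw [ENNReal.ofReal_mul hγ0.le, havgdef, mul_assoc]
        _ ≤ ENNReal.ofReal (1 / (y - a)) * ∫⁻ z in Ioo a b, g z :=
            mul_le_mul_left (ENNReal.ofReal_le_ofReal key) _
        _ ≤ ENNReal.ofReal (1 / (y - a)) *
              ∫⁻ z in Ioo (y - (y - a)) y, ENNReal.ofReal |ω z| := by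
            rw [habs]
            refine mul_le_mul_right (lintegral_mono_set ?_) _
            rw [show y - (y - a) = a by ring]
            exact Ioo_subset_Ioo le_rfl (by linarith [hy.1])
    -- use hae
    rcases eq_or_ne avg 0 with h0 | h0
    · rw [h0, ENNReal.zero_div]
      exact zero_le
    have hne : (volume.restrict (Ioo c d)) ≠ 0 := by
      refine fun h => ?_
      rw [Measure.restrict_eq_zero, Real.volume_Ioo] at h
      exact (ENNReal.ofReal_pos.mpr (by linarith)).ne' h
    haveI : (ae (volume.restrict (Ioo c d))).NeBot := ae_neBot.mpr hne
    have hA0 : A ≠ 0 := by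
      rintro hA00
      obtain ⟨y, hy⟩ := hae.exists
      rw [hA00, zero_mul, nonpos_iff_eq_zero, mul_eq_zero] at hy
      rcases hy with h | h
      · exact (ENNReal.ofReal_pos.mpr hγ0).ne' h
      · exact h0 h
    have hinf_ge : ENNReal.ofReal γ * avg / A ≤
        essInf g (volume.restrict (Ioo c d)) := by
      refine le_essInf_of_ae_le _ ?_
      filter_upwards [hae] with y hy
      exact (ENNReal.div_le_iff_le_mul (Or.inl hA0) (Or.inl hAlt.ne)).mpr
        (hy.trans_eq (mul_comm _ _))
    rw [ENNReal.div_le_iff_le_mul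
      (Or.inr (ENNReal.mul_ne_top ENNReal.ofReal_ne_top hAlt.ne))
      (Or.inr (mul_ne_zero (ENNReal.ofReal_pos.mpr (by positivity)).ne' hA0))]
    calc avg = (ENNReal.ofReal (1 / γ) * ENNReal.ofReal γ) * ((A * A⁻¹) * avg) := by
          rw [← ENNReal.ofReal_mul (by positivity), one_div, inv_mul_cancel₀ hγ0.ne',
            ENNReal.ofReal_one, ENNReal.mul_inv_cancel hA0 hAlt.ne, one_mul, one_mul]
      _ = ENNReal.ofReal (1 / γ) * A * (ENNReal.ofReal γ * avg / A) := by
          simp only [div_eq_mul_inv]; ring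
      _ ≤ ENNReal.ofReal (1 / γ) * A * essInf g (volume.restrict (Ioo c d)) :=
          mul_le_mul_right hinf_ge _
    -- per-configuration bound
  have hterm : ∀ a b c d : ℝ, a < b → b ≤ c → c < d → b - a = γ * (d - a) →
      d - c = γ * (d - a) →
      (ENNReal.ofReal (1 / (b - a)) * ∫⁻ y in Ioo a b, ENNReal.ofReal (ω y)) /
        essInf (fun y => ENNReal.ofReal (ω y)) (volume.restrict (Ioo c d)) ≤ K := by
    intro a b c d hab hbc hcd h1 h2
    rw [hKdef, angleA1]
    refine le_iSup_of_le a (le_iSup_of_le b (le_iSup_of_le c (le_iSup_of_le d ?_)))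
    rw [iSup_pos hab, iSup_pos hbc, iSup_pos hcd, iSup_pos h1, iSup_pos h2]
  have hlow : A ≤ K := by
    rcases eq_top_or_lt_top K with hKtop | hKlt
    · rw [hKtop]; exact le_top
    have hE : ∀ᵐ x ∂(volume : Measure ℝ), 0 < ω x ∧
        ∀ p q : ℚ, (p : ℝ) < x → x < (q : ℝ) →
          essInf (fun y => ENNReal.ofReal (ω y)) (volume.restrict (Ioo (p:ℝ) (q:ℝ)))
            ≤ ENNReal.ofReal (ω x) := by
      refine hωpos.and ?_
      rw [ae_all_iff]
      intro p
      rw [ae_all_iff]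
      intro q
      have h1 : ∀ᵐ x ∂(volume.restrict (Ioo (p:ℝ) (q:ℝ))),
          essInf (fun y => ENNReal.ofReal (ω y)) (volume.restrict (Ioo (p:ℝ) (q:ℝ)))
            ≤ ENNReal.ofReal (ω x) := ae_essInf_le
      filter_upwards [(ae_restrict_iff' measurableSet_Ioo).mp h1] with x hx hp hq
      exact hx ⟨hp, hq⟩
    rw [hAdef, A1plusConst]
    refine essSup_le_of_ae_le K ?_
    filter_upwards [hE] with x hx
    obtain ⟨hx0, hxE⟩ := hx
    show Mminus ω x / ENNReal.ofReal (ω x) ≤ K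
    rw [ENNReal.div_le_iff_le_mul (Or.inl (ENNReal.ofReal_pos.mpr hx0).ne')
      (Or.inl ENNReal.ofReal_ne_top), Mminus]
    refine iSup_le fun h => iSup_le fun hh => ?_
    set θ : ℝ := (2 - 3*γ)/(2-γ) with hθdef
    have h2γ : (0:ℝ) < 2 - γ := by linarith
    have hθ0 : 0 < θ := div_pos (by linarith) h2γ
    have hθ1 : θ < 1 := by rw [hθdef, div_lt_one h2γ]; linarith
    have h1θ : 1 - θ = 2*γ/(2-γ) := by rw [hθdef]; field_simp; ring
    have hθa : γ < 1 - θ := by rw [h1θ, lt_div_iff₀ h2γ]; nlinarith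
    have hθb : (1-θ)*(1-γ) < γ := by
      rw [h1θ, div_mul_eq_mul_div, div_lt_iff₀ h2γ]; nlinarith
    set I : ℕ → Set ℝ := fun k => Ioo (x - θ^k*h) (x - θ^(k+1)*h) with hIdef
    -- step 2: bound on each piece
    have hIk : ∀ k : ℕ, (∫⁻ y in I k, ENNReal.ofReal (ω y))
        ≤ ENNReal.ofReal (θ^k*h - θ^(k+1)*h) * (K * ENNReal.ofReal (ω x)) := by
      intro k
      set ρ := θ^k*h with hρdef
      have hρ0 : 0 < ρ := by positivity
      set a := x - ρ with hadef
      set b := x - θ*ρ with hbdef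
      set t := (1-θ)*ρ with htdef
      have ht0 : 0 < t := by nlinarith
      set d := a + t/γ with hddef
      set c := d - t with hcdef
      have hba : b - a = t := by rw [hbdef, hadef, htdef]; ring
      have hab : a < b := by linarith
      have h1 : b - a = γ * (d - a) := by
        rw [hba, hddef]; field_simp; ring
      have h2 : d - c = γ * (d - a) := by rw [hcdef, ← h1, hba]; ring
      have hbc : b ≤ c := by
        have h1γ : 2 * γ ≤ 1 := by linarith
        have hcb : c - b = t/γ - 2*t := by rw [hcdef, hddef, hadef, hbdef, htdef]; ring
        have : 2*t ≤ t/γ := by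
          rw [le_div_iff₀ hγ0]; nlinarith
        linarith
      have hcd : c < d := by rw [hcdef]; linarith
      have hcx : c < x := by
        have : t/γ < ρ + t := by rw [div_lt_iff₀ hγ0]; nlinarith
        rw [hcdef, hddef, hadef]; linarith
      have hxd : x < d := by
        have : ρ < t/γ := by rw [lt_div_iff₀ hγ0]; nlinarith
        rw [hddef, hadef]; linarith
      obtain ⟨p, hp1, hp2⟩ := exists_rat_btwn hcx
      obtain ⟨q, hq1, hq2⟩ := exists_rat_btwn hxd
      have hinf1 : essInf (fun y => ENNReal.ofReal (ω y)) (volume.restrict (Ioo c d))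
          ≤ essInf (fun y => ENNReal.ofReal (ω y)) (volume.restrict (Ioo (p:ℝ) (q:ℝ))) :=
        essInf_antitone_measure (Measure.absolutelyContinuous_of_le
          (Measure.restrict_mono (Ioo_subset_Ioo hp1.le hq2.le) le_rfl))
      have hinfle : essInf (fun y => ENNReal.ofReal (ω y)) (volume.restrict (Ioo c d))
          ≤ ENNReal.ofReal (ω x) := hinf1.trans (hxE p q hp2 hq1)
      have havg : ENNReal.ofReal (1/(b-a)) * ∫⁻ y in Ioo a b, ENNReal.ofReal (ω y)
          ≤ K * essInf (fun y => ENNReal.ofReal (ω y)) (volume.restrict (Ioo c d)) :=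
        (ENNReal.div_le_iff_le_mul (Or.inr hKlt.ne)
          (Or.inl (hinfle.trans_lt ENNReal.ofReal_lt_top).ne)).mp
          (hterm a b c d hab hbc hcd h1 h2)
      have hIeq : I k = Ioo a b := by
        simp only [hIdef, hadef, hbdef, hρdef]
        congr 1
        rw [pow_succ]; ring
      have htba : θ^k*h - θ^(k+1)*h = b - a := by
        rw [hba, htdef, hρdef, pow_succ]; ring
      have hcancel : ENNReal.ofReal (b-a) * ENNReal.ofReal (1/(b-a)) = 1 := by
        rw [← ENNReal.ofReal_mul (by linarith : (0:ℝ) ≤ b - a), mul_one_div,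
          div_self (by linarith : b - a ≠ 0), ENNReal.ofReal_one]
      rw [hIeq, htba]
      calc (∫⁻ y in Ioo a b, ENNReal.ofReal (ω y))
          = ENNReal.ofReal (b-a) *
            (ENNReal.ofReal (1/(b-a)) * ∫⁻ y in Ioo a b, ENNReal.ofReal (ω y)) := by
            rw [← mul_assoc, hcancel, one_mul]
        _ ≤ ENNReal.ofReal (b-a) *
            (K * essInf (fun y => ENNReal.ofReal (ω y)) (volume.restrict (Ioo c d))) :=
            mul_le_mul_right havg _
        _ ≤ ENNReal.ofReal (b-a) * (K * ENNReal.ofReal (ω x)) :=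
            mul_le_mul_right (mul_le_mul_right hinfle _) _
    -- pairwise disjointness
    have hd2 : ∀ k m : ℕ, k < m → Disjoint (I k) (I m) := by
      intro k m hkm
      simp only [hIdef]
      rw [Set.Ioo_disjoint_Ioo]
      refine (min_le_left _ _).trans (le_trans ?_ (le_max_right _ _))
      have hpow : θ^m ≤ θ^(k+1) := pow_le_pow_of_le_one hθ0.le hθ1.le hkm
      nlinarith
    have hdisj : Pairwise (Function.onFun Disjoint I) := by
      intro k m hkm
      rcases hkm.lt_or_gt with hlt | hlt
      · exact hd2 k m hlt
      · exact (hd2 m k hlt).symm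
    -- covering a.e.
    have hsub : ∀ k, I k ⊆ Ioo (x - h) x := by
      intro k y hy
      have hk1 : θ^k ≤ 1 := pow_le_one₀ hθ0.le hθ1.le
      have hk2 : 0 < θ^(k+1)*h := by positivity
      constructor
      · have : θ^k*h ≤ h := by nlinarith
        have := hy.1
        simp only [hIdef] at hy
        linarith [hy.1]
      · simp only [hIdef] at hy
        linarith [hy.2]
    have hcover : Ioo (x - h) x \ (⋃ k, I k) ⊆ range (fun k : ℕ => x - θ^k*h) := by
      intro y hy
      obtain ⟨hy1, hy2⟩ := hy
      by_contra hy3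
      set s := x - y with hsdef
      have hs0 : 0 < s := by simp only [hsdef]; linarith [hy1.2]
      have hsh : s < h := by simp only [hsdef]; linarith [hy1.1]
      obtain ⟨n, hn⟩ := exists_pow_lt_of_lt_one (div_pos hs0 hh) hθ1
      have hP : ∃ n : ℕ, θ^n*h < s := ⟨n, by rw [← lt_div_iff₀ hh]; exact hn⟩
      have hk1 : θ^(Nat.find hP)*h < s := Nat.find_spec hP
      have hk0 : Nat.find hP ≠ 0 := by
        intro hk00
        rw [hk00] at hk1
        simp only [pow_zero, one_mul] at hk1
        linarith
      obtain ⟨j, hj⟩ := Nat.exists_eq_succ_of_ne_zero hk0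
      have hj1 : ¬ (θ^j*h < s) := Nat.find_min hP (by omega)
      push_neg at hj1
      have hj2 : θ^j*h ≠ s := by
        intro he
        refine hy3 ⟨j, ?_⟩
        show x - θ^j*h = y
        rw [he, hsdef]; ring
      have hmem : y ∈ I j := by
        simp only [hIdef, mem_Ioo]
        constructor
        · have : s < θ^j*h := lt_of_le_of_ne hj1 (Ne.symm hj2)
          simp only [hsdef] at this; linarith
        · have : θ^(j+1)*h < s := by
            have := hk1
            rw [hj] at this
            exact this
          simp only [hsdef] at this; linarith
      exact hy2 (mem_iUnion.mpr ⟨j, hmem⟩)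
    have haeeq : Ioo (x - h) x =ᵐ[(volume : Measure ℝ)] ⋃ k, I k := by
      rw [ae_eq_set]
      constructor
      · exact measure_mono_null hcover ((countable_range _).measure_zero _)
      · rw [diff_eq_empty.mpr (iUnion_subset hsub)]
        exact measure_empty
    have hsplit : (∫⁻ y in Ioo (x - h) x, ENNReal.ofReal (ω y))
        = ∑' k, ∫⁻ y in I k, ENNReal.ofReal (ω y) := by
      rw [setLIntegral_congr haeeq, lintegral_iUnion (fun k => measurableSet_Ioo) hdisj]
    have hsum : ∑' k : ℕ, ENNReal.ofReal (θ^k*h - θ^(k+1)*h) = ENNReal.ofReal h := by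
      have heq : ∀ k : ℕ, ENNReal.ofReal (θ^k*h - θ^(k+1)*h)
          = ENNReal.ofReal θ ^ k * ENNReal.ofReal ((1-θ)*h) := by
        intro k
        rw [← ENNReal.ofReal_pow hθ0.le, ← ENNReal.ofReal_mul (by positivity)]
        congr 1
        rw [pow_succ]; ring
      simp_rw [heq]
      rw [ENNReal.tsum_mul_right, ENNReal.tsum_geometric,
        show (1:ℝ≥0∞) - ENNReal.ofReal θ = ENNReal.ofReal (1-θ) by
          rw [ENNReal.ofReal_sub _ hθ0.le, ENNReal.ofReal_one],
        ENNReal.ofReal_mul (by linarith : (0:ℝ) ≤ 1-θ), ← mul_assoc,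
        ENNReal.inv_mul_cancel (ENNReal.ofReal_pos.mpr (by linarith)).ne'
          ENNReal.ofReal_ne_top, one_mul]
    calc ENNReal.ofReal (1/h) * ∫⁻ y in Ioo (x - h) x, ENNReal.ofReal |ω y|
        = ENNReal.ofReal (1/h) * ∑' k, ∫⁻ y in I k, ENNReal.ofReal (ω y) := by
          rw [habs, hsplit]
      _ ≤ ENNReal.ofReal (1/h) *
            ∑' k, ENNReal.ofReal (θ^k*h - θ^(k+1)*h) * (K * ENNReal.ofReal (ω x)) :=
          mul_le_mul_right (ENNReal.tsum_le_tsum hIk) _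
      _ = ENNReal.ofReal (1/h) * (ENNReal.ofReal h * (K * ENNReal.ofReal (ω x))) := by
          rw [ENNReal.tsum_mul_right, hsum]
      _ = K * ENNReal.ofReal (ω x) := by
          rw [← mul_assoc, ← ENNReal.ofReal_mul (by positivity), one_div,
            inv_mul_cancel₀ hh.ne', ENNReal.ofReal_one, one_mul]
  exact ⟨⟨fun hA => lt_of_le_of_lt hup (ENNReal.mul_lt_top ENNReal.ofReal_lt_top hA),
    fun hK => lt_of_le_of_lt hlow hK⟩, hlow, hup⟩
end
end

section
/- Let ω ∈ A₁⁺(ℝ). Then for every bounded open interval I, exp( (1/|I⁻|)∫_{I⁻} (ln ω − ess inf_{I⁺} ln ω)₊ ) ≤ 1 + 2[ω]_{A₁⁺(ℝ)}. In particular ln ω ∈ BLO⁺(ℝ) with ‖ln ω‖_{BLO⁺(ℝ)} ≤ ln(1 + 2[ω]_{A₁⁺(ℝ)}). -/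
open MeasureTheory Set Filter ENNReal NNReal

noncomputable section

/-- Key consequence of the `A₁⁺` condition: given `a < m < b`, the weight is
essentially bounded below on `(m, b)` by a constant `τ > 0` whose product with
`(b-a) * [ω]` dominates `∫_{(a,m)} ω`. -/
lemma A1plus_key (ω : ℝ → ℝ) (hω : IsA1plusWeight ω) {a m b : ℝ}
    (ham : a < m) (hmb : m < b) :
    ∃ τ : ℝ, 0 < τ ∧ (∀ᵐ x ∂volume.restrict (Ioo m b), τ ≤ ω x) ∧
      ∫ x in Ioo a m, ω x ≤ (b - a) * (A1plusConst ω).toReal * τ := by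
  obtain ⟨hloc, hnn, hpos, hAfin⟩ := hω
  set A := A1plusConst ω with hA
  -- the pointwise maximal bound
  have hae : ∀ᵐ x ∂(volume : Measure ℝ), Mminus ω x ≤ A * ENNReal.ofReal (ω x) := by
    filter_upwards [ae_le_essSup (fun x => Mminus ω x / ENNReal.ofReal (ω x)), hpos]
      with x hx hx0
    rw [ENNReal.div_le_iff (ENNReal.ofReal_pos.2 hx0).ne' ENNReal.ofReal_ne_top] at hx
    rw [hA, A1plusConst]
    exact hx
  set L : ℝ≥0∞ := ∫⁻ x in Ioo a m, ENNReal.ofReal (ω x) with hL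
  have hωmeas : AEMeasurable ω (volume : Measure ℝ) :=
    hloc.aestronglyMeasurable.aemeasurable
  have hLpos : 0 < L := by
    rw [hL, pos_iff_ne_zero]
    intro h0
    rw [lintegral_eq_zero_iff' (hωmeas.restrict.ennreal_ofReal)] at h0
    have hfalse : ∀ᵐ x ∂volume.restrict (Ioo a m), False := by
      filter_upwards [h0, ae_restrict_of_ae hpos] with x h1 h2
      simp only [Pi.zero_apply, ENNReal.ofReal_eq_zero] at h1
      linarith
    rw [ae_iff] at hfalse
    simp only [not_false_eq_true, setOf_true, Measure.restrict_apply_univ,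
      Real.volume_Ioo, ENNReal.ofReal_eq_zero] at hfalse
    linarith
  have hωint : IntegrableOn ω (Ioo a m) volume :=
    (hloc.integrableOn_isCompact isCompact_Icc).mono_set Ioo_subset_Icc_self
  have hLfin : L < ⊤ := by
    have := hωint.2
    rw [hasFiniteIntegral_iff_ofReal (Eventually.of_forall fun x => hnn x)] at this
    exact this
  -- the main a.e. inequality on the right half
  have hkey : ∀ᵐ x ∂volume.restrict (Ioo m b),
      L ≤ ENNReal.ofReal (b - a) * A * ENNReal.ofReal (ω x) := by
    filter_upwards [ae_restrict_of_ae hae, ae_restrict_mem measurableSet_Ioo]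
      with x hx hxm
    have hxa : a < x := ham.trans hxm.1
    have h1 : L ≤ ∫⁻ y in Ioo a x, ENNReal.ofReal (ω y) :=
      lintegral_mono_set (Ioo_subset_Ioo le_rfl hxm.1.le)
    have h2 : ENNReal.ofReal (1 / (x - a)) * ∫⁻ y in Ioo a x, ENNReal.ofReal (ω y)
        ≤ Mminus ω x := by
      have h2' : ENNReal.ofReal (1 / (x - a)) * ∫⁻ y in Ioo (x - (x - a)) x,
          ENNReal.ofReal |ω y| ≤ Mminus ω x :=
        le_iSup₂ (f := fun (h : ℝ) (_ : 0 < h) =>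
          ENNReal.ofReal (1 / h) * ∫⁻ y in Ioo (x - h) x, ENNReal.ofReal |ω y|)
          (x - a) (by linarith)
      rw [show x - (x - a) = a by ring] at h2'
      have habs : (∫⁻ y in Ioo a x, ENNReal.ofReal |ω y|)
          = ∫⁻ y in Ioo a x, ENNReal.ofReal (ω y) :=
        lintegral_congr fun y => by rw [abs_of_nonneg (hnn y)]
      rwa [habs] at h2'
    have h3 : (∫⁻ y in Ioo a x, ENNReal.ofReal (ω y))
        ≤ ENNReal.ofReal (x - a) * Mminus ω x := by
      calc (∫⁻ y in Ioo a x, ENNReal.ofReal (ω y))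
          = (ENNReal.ofReal (x - a) * ENNReal.ofReal (1 / (x - a))) *
            ∫⁻ y in Ioo a x, ENNReal.ofReal (ω y) := by
            rw [← ENNReal.ofReal_mul (by linarith)]
            rw [mul_one_div, div_self (by linarith : x - a ≠ 0)]
            simp
        _ = ENNReal.ofReal (x - a) * (ENNReal.ofReal (1 / (x - a)) *
            ∫⁻ y in Ioo a x, ENNReal.ofReal (ω y)) := by ring
        _ ≤ ENNReal.ofReal (x - a) * Mminus ω x := by
            exact mul_le_mul_right h2 _
    calc L ≤ ENNReal.ofReal (x - a) * Mminus ω x := h1.trans h3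
      _ ≤ ENNReal.ofReal (b - a) * (A * ENNReal.ofReal (ω x)) :=
          mul_le_mul' (ENNReal.ofReal_le_ofReal (by linarith [hxm.2])) hx
      _ = ENNReal.ofReal (b - a) * A * ENNReal.ofReal (ω x) := by ring
  -- the restricted measure is nontrivial
  have hres0 : volume.restrict (Ioo m b) ≠ 0 := by
    intro h0
    have : (volume.restrict (Ioo m b)) univ = 0 := by rw [h0]; simp
    rw [Measure.restrict_apply_univ, Real.volume_Ioo] at this
    simp only [ENNReal.ofReal_eq_zero] at this
    linarith
  haveI : (ae (volume.restrict (Ioo m b))).NeBot := ae_neBot.2 hres0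
  -- A ≠ 0
  have hAne : A ≠ 0 := by
    obtain ⟨x, hx⟩ := hkey.exists
    intro h0
    rw [h0, mul_zero, zero_mul] at hx
    exact hLpos.ne' (le_antisymm hx (zero_le))
  have hCpos : 0 < A.toReal := ENNReal.toReal_pos hAne hAfin.ne
  set C := A.toReal with hC
  have hba : (0:ℝ) < b - a := by linarith
  have hLtr : 0 < L.toReal := ENNReal.toReal_pos hLpos.ne' hLfin.ne
  refine ⟨L.toReal / ((b - a) * C), div_pos hLtr (mul_pos hba hCpos), ?_, ?_⟩
  · filter_upwards [hkey] with x hx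
    have hfin : ENNReal.ofReal (b - a) * A * ENNReal.ofReal (ω x) ≠ ⊤ := by
      exact ENNReal.mul_ne_top (ENNReal.mul_ne_top ENNReal.ofReal_ne_top hAfin.ne)
        ENNReal.ofReal_ne_top
    have := ENNReal.toReal_mono hfin hx
    rw [ENNReal.toReal_mul, ENNReal.toReal_mul, ENNReal.toReal_ofReal (by linarith),
      ENNReal.toReal_ofReal (hnn x)] at this
    rw [div_le_iff₀ (mul_pos hba hCpos)]
    calc L.toReal ≤ (b - a) * C * ω x := this
      _ = ω x * ((b - a) * C) := by ring
  · have hint : ∫ x in Ioo a m, ω x = L.toReal := by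
      rw [hL, integral_eq_lintegral_of_nonneg_ae
        (Eventually.of_forall fun x => hnn x) hloc.aestronglyMeasurable.restrict]
    rw [hint, mul_comm ((b-a) * C), div_mul_cancel₀ _ (mul_pos hba hCpos).ne']



/-- In a nontrivial a.e. filter, any real-valued function is coboundedunder `≥`. -/
lemma aux_cobounded {α : Type*} {m : MeasurableSpace α} (ν : Measure α)
    [hne : (ae ν).NeBot] (u : α → ℝ) : IsCoboundedUnder (· ≥ ·) (ae ν) u := by
  have h : ¬ ∀ n : ℕ, ∀ᵐ x ∂ν, ¬ (u x ≤ n) := by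
    intro h
    have h2 : ∀ᵐ x ∂ν, ∀ n : ℕ, ¬ (u x ≤ n) := ae_all_iff.2 h
    have h3 : ∀ᵐ x ∂ν, False := by
      filter_upwards [h2] with x hx
      obtain ⟨n, hn⟩ := exists_nat_ge (u x)
      exact hx n hn
    obtain ⟨x, hx⟩ := h3.exists
    exact hx
  push_neg at h
  obtain ⟨n, hn⟩ := h
  refine IsCoboundedUnder.of_frequently_le (a := (n : ℝ)) ?_
  simpa [not_not] using hn

set_option maxHeartbeats 2000000 in
lemma stmt7_core (ω : ℝ → ℝ) (hω : IsA1plusWeight ω) {a b : ℝ} (hab : a < b) :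
    Integrable (fun x => max (Real.log (ω x) -
        essInf (fun y => Real.log (ω y)) (volume.restrict (Ioo ((a + b) / 2) b))) 0)
      (volume.restrict (Ioo a ((a + b) / 2))) ∧
    Real.exp (⨍ x in Ioo a ((a + b) / 2), max (Real.log (ω x) -
        essInf (fun y => Real.log (ω y)) (volume.restrict (Ioo ((a + b) / 2) b))) 0)
      ≤ 1 + 2 * (A1plusConst ω).toReal := by
  obtain ⟨hloc, hnn, hpos, hAfin⟩ := hω
  set m := (a + b) / 2 with hm
  have ham : a < m := by rw [hm]; linarith
  have hmb : m < b := by rw [hm]; linarith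
  obtain ⟨τ, hτpos, hτae, hτint⟩ := A1plus_key ω ⟨hloc, hnn, hpos, hAfin⟩ ham hmb
  set C := (A1plusConst ω).toReal with hCdef
  have hC0 : 0 ≤ C := ENNReal.toReal_nonneg
  set μ := volume.restrict (Ioo a m) with hμ
  haveI : IsFiniteMeasure μ := ⟨by
    rw [hμ, Measure.restrict_apply_univ, Real.volume_Ioo]; exact ENNReal.ofReal_lt_top⟩
  haveI : NeZero μ := ⟨by
    intro h0
    have h1 : μ univ = 0 := by rw [h0]; simp
    rw [hμ, Measure.restrict_apply_univ, Real.volume_Ioo] at h1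
    rw [ENNReal.ofReal_eq_zero] at h1
    linarith⟩
  set c := essInf (fun y => Real.log (ω y)) (volume.restrict (Ioo m b)) with hc
  -- the essential infimum is at least `log τ`
  haveI hne : (ae (volume.restrict (Ioo m b))).NeBot := by
    refine ae_neBot.2 fun h0 => ?_
    have h1 : (volume.restrict (Ioo m b)) univ = 0 := by rw [h0]; simp
    rw [Measure.restrict_apply_univ, Real.volume_Ioo, ENNReal.ofReal_eq_zero] at h1
    linarith
  have hlogτ : ∀ᵐ x ∂volume.restrict (Ioo m b), Real.log τ ≤ Real.log (ω x) := by
    filter_upwards [hτae] with x hx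
    exact Real.log_le_log hτpos hx
  have hcge : Real.log τ ≤ c := by
    rw [hc, essInf]
    exact le_liminf_of_le (aux_cobounded _ _) hlogτ
  have hexpc : Real.exp (-c) ≤ 1 / τ := by
    have h1 : Real.exp (-c) ≤ Real.exp (-(Real.log τ)) :=
      Real.exp_le_exp.2 (by linarith)
    rw [Real.exp_neg (Real.log τ), Real.exp_log hτpos, ← one_div] at h1
    exact h1
  -- measurability and integrability
  have hmeasω : AEStronglyMeasurable ω μ := hloc.aestronglyMeasurable.restrict
  have hlogmeas : AEMeasurable (fun x => Real.log (ω x)) μ :=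
    Real.measurable_log.comp_aemeasurable hmeasω.aemeasurable
  have hgmeas : AEStronglyMeasurable (fun x => max (Real.log (ω x) - c) 0) μ :=
    ((hlogmeas.sub aemeasurable_const).max aemeasurable_const).aestronglyMeasurable
  have hωint : Integrable ω μ :=
    (hloc.integrableOn_isCompact isCompact_Icc).mono_set Ioo_subset_Icc_self
  have hposμ : ∀ᵐ x ∂μ, 0 < ω x := ae_restrict_of_ae hpos
  have hexpeq : ∀ᵐ x ∂μ, Real.exp (max (Real.log (ω x) - c) 0)
      = max (ω x * Real.exp (-c)) 1 := by
    filter_upwards [hposμ] with x hx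
    rw [Real.exp_monotone.map_max, Real.exp_zero, Real.exp_sub, Real.exp_log hx,
      div_eq_mul_inv, Real.exp_neg]
  have hmaxnn : ∀ x : ℝ, (0:ℝ) ≤ ω x * Real.exp (-c) :=
    fun x => mul_nonneg (hnn x) (Real.exp_pos _).le
  have hmaxint : Integrable (fun x => max (ω x * Real.exp (-c)) 1) μ := by
    refine Integrable.mono' (g := fun x => ω x * Real.exp (-c) + 1)
      ((hωint.mul_const (Real.exp (-c))).add (integrable_const 1)) ?_ ?_
    · exact ((hmeasω.aemeasurable.mul_const _).max aemeasurable_const).aestronglyMeasurable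
    · refine Eventually.of_forall fun x => ?_
      rw [Real.norm_of_nonneg (le_trans zero_le_one (le_max_right _ _))]
      show max (ω x * Real.exp (-c)) 1 ≤ ω x * Real.exp (-c) + 1
      exact max_le (by linarith) (by linarith [hmaxnn x])
  have hexpint : Integrable (fun x => Real.exp (max (Real.log (ω x) - c) 0)) μ :=
    hmaxint.congr (hexpeq.mono fun x h => h.symm)
  have hgint : Integrable (fun x => max (Real.log (ω x) - c) 0) μ := by
    refine hexpint.mono' hgmeas ?_
    refine Eventually.of_forall fun x => ?_
    rw [Real.norm_of_nonneg (le_max_right _ _)]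
    linarith [Real.add_one_le_exp (max (Real.log (ω x) - c) 0)]
  -- Jensen's inequality
  have hjensen : Real.exp (⨍ x, max (Real.log (ω x) - c) 0 ∂μ)
      ≤ ⨍ x, Real.exp (max (Real.log (ω x) - c) 0) ∂μ :=
    convexOn_exp.map_average_le Real.continuous_exp.continuousOn isClosed_univ
      (Eventually.of_forall fun x => mem_univ _) hgint hexpint
  -- estimating the average of the exponential
  have hμuniv : (μ univ).toReal = m - a := by
    rw [hμ, Measure.restrict_apply_univ, Real.volume_Ioo,
      ENNReal.toReal_ofReal (by linarith)]
  have hVpos : (0:ℝ) < m - a := by linarith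
  have havg2 : ⨍ x, Real.exp (max (Real.log (ω x) - c) 0) ∂μ ≤ 1 + 2 * C := by
    rw [average_eq, measureReal_def, hμuniv, smul_eq_mul]
    have hint_le : ∫ x, Real.exp (max (Real.log (ω x) - c) 0) ∂μ
        ≤ ∫ x, (1 + ω x * Real.exp (-c)) ∂μ := by
      refine integral_mono_ae hexpint ((integrable_const 1).add (hωint.mul_const _)) ?_
      filter_upwards [hexpeq] with x hx
      rw [hx]
      exact max_le (by linarith [hmaxnn x]) (by linarith [hmaxnn x])
    have hint_eval : ∫ x, (1 + ω x * Real.exp (-c)) ∂μ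
        = (m - a) + (∫ x, ω x ∂μ) * Real.exp (-c) := by
      rw [integral_add (integrable_const 1) (hωint.mul_const _), integral_const,
        integral_mul_const, measureReal_def, hμuniv, smul_eq_mul, mul_one]
    have hωle : ∫ x, ω x ∂μ ≤ (b - a) * C * τ := hτint
    have hωnonneg : (0:ℝ) ≤ ∫ x, ω x ∂μ := integral_nonneg fun x => hnn x
    have hprod : (∫ x, ω x ∂μ) * Real.exp (-c) ≤ (b - a) * C := by
      calc (∫ x, ω x ∂μ) * Real.exp (-c) ≤ ((b - a) * C * τ) * (1 / τ) := by
            refine mul_le_mul hωle hexpc (Real.exp_pos _).le ?_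
            exact mul_nonneg (mul_nonneg (by linarith) hC0) hτpos.le
        _ = (b - a) * C := by field_simp
    have hmain : ∫ x, Real.exp (max (Real.log (ω x) - c) 0) ∂μ
        ≤ (m - a) + (b - a) * C := by linarith
    calc (m - a)⁻¹ * ∫ x, Real.exp (max (Real.log (ω x) - c) 0) ∂μ
        ≤ (m - a)⁻¹ * ((m - a) + (b - a) * C) := by
          exact mul_le_mul_of_nonneg_left hmain (inv_nonneg.2 hVpos.le)
      _ = 1 + 2 * C := by
          have hm2 : m - a = (b - a) / 2 := by rw [hm]; ring
          have hba' : b - a ≠ 0 := by linarith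
          rw [hm2]
          field_simp
  exact ⟨hgint, le_trans hjensen havg2⟩

/-- for `ω ∈ A₁⁺(ℝ)` and every bounded open interval `(a,b)`,
`exp( avg_{I⁻} (ln ω − ess inf_{I⁺} ln ω)₊ ) ≤ 1 + 2[ω]_{A₁⁺(ℝ)}`; in
particular `ln ω ∈ BLO⁺(ℝ)` with `‖ln ω‖_{BLO⁺} ≤ ln(1 + 2[ω]_{A₁⁺})`. -/
theorem stmt7 (ω : ℝ → ℝ) (hω : IsA1plusWeight ω) :
    (∀ a b : ℝ, a < b →
      Real.exp (⨍ x in Ioo a ((a + b) / 2),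
          max (Real.log (ω x) -
            essInf (fun y => Real.log (ω y)) (volume.restrict (Ioo ((a + b) / 2) b))) 0)
        ≤ 1 + 2 * (A1plusConst ω).toReal) ∧
    MemBLOplus (fun x => Real.log (ω x)) ∧
    bloNorm (fun x => Real.log (ω x)) ≤
      ENNReal.ofReal (Real.log (1 + 2 * (A1plusConst ω).toReal)) := by
  have hC0 : (0:ℝ) ≤ (A1plusConst ω).toReal := ENNReal.toReal_nonneg
  -- the per-interval bound on `bloTerm`
  have hbound : ∀ a b : ℝ, a < b → bloTerm (fun x => Real.log (ω x)) a b ≤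
      ENNReal.ofReal (Real.log (1 + 2 * (A1plusConst ω).toReal)) := by
    intro a b hab
    obtain ⟨hgint, hexp⟩ := stmt7_core ω hω hab
    set m := (a + b) / 2 with hm
    have ham : a < m := by rw [hm]; linarith
    set c := essInf (fun y => Real.log (ω y)) (volume.restrict (Ioo m b)) with hc
    have h1 : (∫⁻ x in Ioo a m, ENNReal.ofReal (max (Real.log (ω x) - c) 0))
        = ENNReal.ofReal (∫ x in Ioo a m, max (Real.log (ω x) - c) 0) :=
      (ofReal_integral_eq_lintegral_ofReal hgint
        (Eventually.of_forall fun x => le_max_right _ _)).symm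
    have hfrac : (0:ℝ) ≤ 2 / (b - a) := div_nonneg (by norm_num) (by linarith)
    rw [bloTerm]
    rw [h1, ← ENNReal.ofReal_mul hfrac]
    apply ENNReal.ofReal_le_ofReal
    have havg : ⨍ x in Ioo a m, max (Real.log (ω x) - c) 0
        = (2 / (b - a)) * ∫ x in Ioo a m, max (Real.log (ω x) - c) 0 := by
      rw [setAverage_eq, measureReal_def, Real.volume_Ioo, ENNReal.toReal_ofReal (by linarith),
        smul_eq_mul]
      congr 1
      rw [show m - a = (b - a) / 2 by rw [hm]; ring, inv_div]
    have hfexp : ⨍ x in Ioo a m, max (Real.log (ω x) - c) 0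
        ≤ Real.log (1 + 2 * (A1plusConst ω).toReal) := by
      rw [Real.le_log_iff_exp_le (by linarith)]
      exact hexp
    rw [← havg]
    exact hfexp
  have hnorm : bloNorm (fun x => Real.log (ω x)) ≤
      ENNReal.ofReal (Real.log (1 + 2 * (A1plusConst ω).toReal)) := by
    rw [bloNorm]
    exact iSup_le fun a => iSup_le fun b => iSup_le fun hab => hbound a b hab
  have hlocint : LocallyIntegrable (fun x => Real.log (ω x)) volume := by
    intro x₀
    refine ⟨Ioo (x₀ - 1) (x₀ + 1), Ioo_mem_nhds (by linarith) (by linarith), ?_⟩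
    obtain ⟨τ, hτpos, hτae, -⟩ := A1plus_key ω hω
      (show x₀ - 3 < x₀ - 1 by linarith) (show x₀ - 1 < x₀ + 1 by linarith)
    have hωint2 : IntegrableOn ω (Ioo (x₀ - 1) (x₀ + 1)) volume :=
      (hω.1.integrableOn_isCompact isCompact_Icc).mono_set Ioo_subset_Icc_self
    refine Integrable.mono' (g := fun y => ω y + |Real.log τ|)
      (hωint2.add (integrable_const _)) ?_ ?_
    · exact (Real.measurable_log.comp_aemeasurable
        hω.1.aestronglyMeasurable.restrict.aemeasurable).aestronglyMeasurable
    · filter_upwards [hτae] with y hy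
      show |Real.log (ω y)| ≤ ω y + |Real.log τ|
      have h0 : 0 < ω y := lt_of_lt_of_le hτpos hy
      rw [abs_le]
      constructor
      · have h1 := Real.log_le_log hτpos hy
        have h2 := neg_abs_le (Real.log τ)
        have h3 := hω.2.1 y
        linarith
      · have h1 := Real.log_le_sub_one_of_pos h0
        have h2 := abs_nonneg (Real.log τ)
        linarith
  exact ⟨fun a b hab => (stmt7_core ω hω hab).2, ⟨hlocint,
    lt_of_le_of_lt hnorm ENNReal.ofReal_lt_top⟩, hnorm⟩
end
end
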